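/- Let (E,ℒ,ℬ) be a weakly left-resolving labelled space with ℬ closed under relative complements. Let ξ be a tight filter in E(S) and let F ⊆ E(S)∖{0} be a finite subset such that ξ ∩ F ≠ ∅ and, for all u,v ∈ F, uv = 0 or u ≤ v or v ≤ u. Let w be the minimum of the (totally ordered) set ξ ∩ F. Then there exists a nonzero z ∈ E(S) with z ≤ w and zu = 0 for every u ∈ F with u < w. -/

import Mathlib

open Set

/-- A filter in the sub-poset `P` of a powerset, ordered by inclusion, with least
element `∅`: nonempty, upward-closed within `P`, downward-directed, not containing `∅`. -/
def IsFilterIn {V : Type*} (P F : Set (Set V)) : Prop :=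
  F ⊆ P ∧ F.Nonempty ∧ ∅ ∉ F ∧
    (∀ X ∈ F, ∀ Y ∈ P, X ⊆ Y → Y ∈ F) ∧
    (∀ X ∈ F, ∀ Y ∈ F, ∃ Z ∈ F, Z ⊆ X ∧ Z ⊆ Y)

/-- An ultrafilter in `P` is a maximal filter in `P`. -/
def IsUltrafilterIn {V : Type*} (P F : Set (Set V)) : Prop :=
  IsFilterIn P F ∧ ∀ G : Set (Set V), IsFilterIn P G → F ⊆ G → G = F

/-- A labelled graph: a directed graph with source, range and a surjective labelling map. -/
structure LGraph (V Edg A : Type*) where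
  src : Edg → V
  rng : Edg → V
  lbl : Edg → A
  lbl_surj : Function.Surjective lbl

namespace LGraph

variable {V Edg A : Type*} (G : LGraph V Edg A)

/-- A finite path: a list of composable edges. -/
def IsPath (p : List Edg) : Prop := p.Chain' fun e f => G.rng e = G.src f

/-- The relative range `r(S, α)`, with the convention `r(S, ω) = S`. -/
def relR (S : Set V) : List A → Set V
  | [] => S
  | a :: w =>
      {v | ∃ p : List Edg, G.IsPath p ∧ p.map G.lbl = a :: w ∧
        ∃ h : p ≠ [], G.src (p.head h) ∈ S ∧ G.rng (p.getLast h) = v}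

/-- `α ∈ ℒ*(E)` : a finite labelled path (including the empty word). -/
def IsLbl (α : List A) : Prop := ∃ p : List Edg, G.IsPath p ∧ p.map G.lbl = α

/-- An infinite labelled path. -/
def IsLblInf (α : ℕ → A) : Prop :=
  ∃ p : ℕ → Edg, (∀ n, G.rng (p n) = G.src (p (n + 1))) ∧ ∀ n, G.lbl (p n) = α n

end LGraph

/-- A labelled space: a labelled graph together with an accommodating family `ℬ`. -/
structure LabelledSpace (V Edg A : Type*) extends LGraph V Edg A where
  ℬ : Set (Set V)
  inter_mem : ∀ ⦃X Y : Set V⦄, X ∈ ℬ → Y ∈ ℬ → X ∩ Y ∈ ℬ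
  union_mem : ∀ ⦃X Y : Set V⦄, X ∈ ℬ → Y ∈ ℬ → X ∪ Y ∈ ℬ
  range_mem : ∀ α : List A, α ≠ [] → toLGraph.IsLbl α → toLGraph.relR Set.univ α ∈ ℬ
  relR_mem : ∀ ⦃X : Set V⦄, X ∈ ℬ → ∀ α : List A, toLGraph.IsLbl α → toLGraph.relR X α ∈ ℬ

/-- Words of length `≤ ∞`: finite words are lists, infinite words are sequences. -/
abbrev LWord (A : Type*) := List A ⊕ (ℕ → A)

/-- The length of a word in `ℕ∞`. -/
def wlen {A : Type*} : LWord A → ℕ∞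
  | .inl l => (l.length : ℕ∞)
  | .inr _ => (⊤ : ℕ∞)

/-- `α_{1,n}` : the initial subword of length `n`. -/
def wtake {A : Type*} : LWord A → ℕ → List A
  | .inl l, n => l.take n
  | .inr f, n => (List.range n).map f

/-- Concatenation of a finite word with a word. -/
def wappend {A : Type*} (α : List A) : LWord A → LWord A
  | .inl l => .inl (α ++ l)
  | .inr f => .inr fun n => if h : n < α.length then α.get ⟨n, h⟩ else f (n - α.length)

namespace LabelledSpace

variable {V Edg A : Type*} (L : LabelledSpace V Edg A)

abbrev relR : Set V → List A → Set V := L.toLGraph.relR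

abbrev IsLbl : List A → Prop := L.toLGraph.IsLbl

/-- `r(α)` : the range of a word. -/
def wr (α : List A) : Set V := L.relR Set.univ α

/-- Membership in `ℒ^{≤∞}(E)`. -/
def IsLWord : LWord A → Prop
  | .inl l => L.IsLbl l
  | .inr f => L.toLGraph.IsLblInf f

/-- Weakly left-resolving. -/
def WeaklyLeftResolving : Prop :=
  ∀ ⦃X Y : Set V⦄, X ∈ L.ℬ → Y ∈ L.ℬ → ∀ α : List A, α ≠ [] →
    L.relR (X ∩ Y) α = L.relR X α ∩ L.relR Y α

/-- `ℬ` is closed under relative complements. -/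
def ClosedUnderRelComplements : Prop :=
  ∀ ⦃X Y : Set V⦄, X ∈ L.ℬ → Y ∈ L.ℬ → X \ Y ∈ L.ℬ

/-- `ℬ_α = {A ∈ ℬ : A ⊆ r(α)}`. -/
def Bw (α : List A) : Set (Set V) := {X | X ∈ L.ℬ ∧ X ⊆ L.wr α}

/-- `X_α` : the set of ultrafilters in `ℬ_α`. -/
def Xw (α : List A) : Set (Set (Set V)) := {F | IsUltrafilterIn (L.Bw α) F}

/-- `X_{(α)β} = {F ∈ X_β : r(αβ) ∈ F}`, with the convention `X_{(ω)β} = X_β`. -/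
def XP (α β : List A) : Set (Set (Set V)) :=
  match α with
  | [] => L.Xw β
  | a :: l => {F | F ∈ L.Xw β ∧ L.wr ((a :: l) ++ β) ∈ F}

/-- `g_{(α)β}(F) = {C ∩ r(αβ) : C ∈ F}`. -/
def gmap (α β : List A) (F : Set (Set V)) : Set (Set V) :=
  {D | ∃ C ∈ F, D = C ∩ L.wr (α ++ β)}

/-- `h_{[α]β}(F)` : the upward closure of `F` in `ℬ_β` (only depends on `β`). -/
def hmap (β : List A) (F : Set (Set V)) : Set (Set V) :=
  {D | D ∈ L.Bw β ∧ ∃ C ∈ F, C ⊆ D}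

/-- `f_{β[γ]}(F) = {A ∈ ℬ_β : r(A,γ) ∈ F}`. -/
def fmap (β γ : List A) (F : Set (Set V)) : Set (Set V) :=
  {X | X ∈ L.Bw β ∧ L.relR X γ ∈ F}

/-- `X_α^{sink}`. -/
def Xsink (α : List A) : Set (Set (Set V)) :=
  {F | F ∈ L.Xw α ∧ ∀ b : A, ∃ X ∈ F, L.relR X [b] = ∅}

/-- A complete family (of filters) for the word `w`. -/
def IsCompleteFamily (w : LWord A) (F : ℕ → Set (Set V)) : Prop :=
  (∀ n : ℕ, 0 < n → (n : ℕ∞) ≤ wlen w → IsFilterIn (L.Bw (wtake w n)) (F n)) ∧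
  (IsFilterIn (L.Bw []) (F 0) ∨ F 0 = ∅) ∧
  ∀ n : ℕ, (n : ℕ∞) < wlen w →
    F n = {X | X ∈ L.Bw (wtake w n) ∧ L.relR X ((wtake w (n + 1)).drop n) ∈ F (n + 1)}

/-- A complete family of ultrafilters for the word `w`. -/
def IsCompleteUltraFamily (w : LWord A) (F : ℕ → Set (Set V)) : Prop :=
  (∀ n : ℕ, 0 < n → (n : ℕ∞) ≤ wlen w → IsUltrafilterIn (L.Bw (wtake w n)) (F n)) ∧
  (IsUltrafilterIn (L.Bw []) (F 0) ∨ F 0 = ∅) ∧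
  ∀ n : ℕ, (n : ℕ∞) < wlen w →
    F n = {X | X ∈ L.Bw (wtake w n) ∧ L.relR X ((wtake w (n + 1)).drop n) ∈ F (n + 1)}

/-- Membership in `E(S)`: `none` is the zero element, `some (α, X)` stands for `(α, X, α)`. -/
def ESmem : Option (List A × Set V) → Prop
  | none => True
  | some p => p.2 ∈ L.Bw p.1 ∧ p.2 ≠ ∅

/-- `E(S) ∖ {0}`. -/
def ESnz : Set (Option (List A × Set V)) := {p | L.ESmem p ∧ p ≠ none}

/-- The natural order on `E(S)`: `(α,A,α) ≤ (β,B,β)` iff `α = βα'` and `A ⊆ r(B,α')`. -/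
def ESle : Option (List A × Set V) → Option (List A × Set V) → Prop
  | none, _ => True
  | some _, none => False
  | some p, some q => ∃ γ : List A, p.1 = q.1 ++ γ ∧ p.2 ⊆ L.relR q.2 γ

open Classical in
/-- The product in the semilattice `E(S)`. -/
noncomputable def ESmul :
    Option (List A × Set V) → Option (List A × Set V) → Option (List A × Set V)
  | none, _ => none
  | some _, none => none
  | some p, some q =>
    if p.1 <+: q.1 then
      if L.relR p.2 (q.1.drop p.1.length) ∩ q.2 = ∅ then none
      else some (q.1, L.relR p.2 (q.1.drop p.1.length) ∩ q.2)
    else if q.1 <+: p.1 then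
      if p.2 ∩ L.relR q.2 (p.1.drop q.1.length) = ∅ then none
      else some (p.1, p.2 ∩ L.relR q.2 (p.1.drop q.1.length))
    else none

/-- A filter in `E(S)`. -/
def IsESFilter (ξ : Set (Option (List A × Set V))) : Prop :=
  ξ ⊆ L.ESnz ∧ ξ.Nonempty ∧
    (∀ p ∈ ξ, ∀ q, L.ESmem q → L.ESle p q → q ∈ ξ) ∧
    (∀ p ∈ ξ, ∀ q ∈ ξ, ∃ z ∈ ξ, L.ESle z p ∧ L.ESle z q)

/-- `Z` is a cover for `x` in `E(S)`. -/
def ESCover (x : Option (List A × Set V)) (Z : Set (Option (List A × Set V))) : Prop :=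
  (∀ z ∈ Z, L.ESmem z ∧ L.ESle z x) ∧
  ∀ y, L.ESmem y → y ≠ none → L.ESle y x → ∃ z ∈ Z, L.ESmul y z ≠ none

/-- A tight filter in `E(S)`: every finite cover of an element of the filter meets the filter. -/
def IsTightESFilter (ξ : Set (Option (List A × Set V))) : Prop :=
  L.IsESFilter ξ ∧
    ∀ x ∈ ξ, ∀ Z : Set (Option (List A × Set V)), Z.Finite → L.ESCover x Z →
      (Z ∩ ξ).Nonempty

/-- The filter in `E(S)` associated with the pair `(w, F)` of a word together with a
(complete) family: `ξ = ⋃_n ⋃_{X ∈ F n} ↑(w_{1,n}, X)`. -/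
def filterOf (w : LWord A) (F : ℕ → Set (Set V)) : Set (Option (List A × Set V)) :=
  {p | L.ESmem p ∧
    ∃ n : ℕ, (n : ℕ∞) ≤ wlen w ∧ ∃ X ∈ F n, L.ESle (some (wtake w n, X)) p}

/-- `ξ_n = {X : (w_{1,n}, X, w_{1,n}) ∈ ξ}`. -/
def xiN (_L : LabelledSpace V Edg A) (w : LWord A) (ξ : Set (Option (List A × Set V)))
    (n : ℕ) : Set (Set V) :=
  {X | some (wtake w n, X) ∈ ξ}

/-- `T_w` : the tight filters in `E(S)` whose associated word is `w`. -/
def Tw (w : LWord A) : Set (Set (Option (List A × Set V))) :=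
  {ξ | L.IsTightESFilter ξ ∧
    ∃ F : ℕ → Set (Set V), L.IsCompleteFamily w F ∧ ξ = L.filterOf w F}

/-- `T_{(α)w} = {ξ ∈ T_w : ξ₀ is an ultrafilter in ℬ with r(α) ∈ ξ₀}`, with
`T_{(ω)w} = T_w`. -/
def TwP (α : List A) (w : LWord A) : Set (Set (Option (List A × Set V))) :=
  match α with
  | [] => L.Tw w
  | a :: l =>
    {ξ | ξ ∈ L.Tw w ∧ IsUltrafilterIn (L.Bw []) (L.xiN w ξ 0) ∧ L.wr (a :: l) ∈ L.xiN w ξ 0}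

/-- The family `{J_i}` for `αw` built from a family `{F_n}` for `w`:
`J_{|α|+n} = g_{(α)w_{1,n}}(F_n)` for `1 ≤ n ≤ |w|` and
`J_i = f_{α_{1,i}[α_{i+1,|α|}w₁]}(J_{|α|+1})` for `0 ≤ i ≤ |α|`
(reading `J_{|α|} = g_{(α)ω}(F₀)` and `J_i = f_{α_{1,i}[α_{i+1,|α|}]}(J_{|α|})` when `w = ω`). -/
def Jfamily (α : List A) (w : LWord A) (F : ℕ → Set (Set V)) : ℕ → Set (Set V) :=
  match w with
  | .inl [] => fun i =>
      if i < α.length then L.fmap (α.take i) (α.drop i) (L.gmap α [] (F 0))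
      else L.gmap α [] (F 0)
  | w => fun i =>
      if i ≤ α.length then
        L.fmap (α.take i) (α.drop i ++ wtake w 1) (L.gmap α (wtake w 1) (F 1))
      else L.gmap α (wtake w (i - α.length)) (F (i - α.length))

/-- `G_{(α)w}` as an operation on filters in `E(S)`. -/
def Gmap (α : List A) (w : LWord A) (ξ : Set (Option (List A × Set V))) :
    Set (Option (List A × Set V)) :=
  L.filterOf (wappend α w) (L.Jfamily α w (L.xiN w ξ))

/-- The family `{η_n}` for `w` built from a family for `αw`:
`η_n = h_{[α]w_{1,n}}(F_{|α|+n})`. -/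
def Hfam (α : List A) (w : LWord A) (F : ℕ → Set (Set V)) : ℕ → Set (Set V) :=
  fun n => L.hmap (wtake w n) (F (α.length + n))

/-- `H_{[α]w}` as an operation on filters in `E(S)`. -/
def Hmap (α : List A) (w : LWord A) (ξ : Set (Option (List A × Set V))) :
    Set (Option (List A × Set V)) :=
  L.filterOf w (L.Hfam α w (L.xiN (wappend α w) ξ))

end LabelledSpace

/-- The topology of pointwise convergence on sets of subsets of `V`
(product topology with discrete coordinates, via indicator functions). -/
def memTopology (V : Type*) : TopologicalSpace (Set (Set V)) :=
  show TopologicalSpace (Set V → Prop) from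
    @Pi.topologicalSpace (Set V) (fun _ => Prop) (fun _ => ⊥)

/-!
If no nonzero `z ≤ w` were orthogonal to every `u ∈ F` strictly below `w`, those `u` would form
a finite cover of `w ∈ ξ`. Tightness then puts one of them in `ξ`, contradicting the minimality
of `w` in `ξ ∩ F`.
-/

namespace LabelledSpace

variable {V Edg A : Type*} (L : LabelledSpace V Edg A)

theorem ESle_antisymm {u v : Option (List A × Set V)} (huv : L.ESle u v) (hvu : L.ESle v u) :
    u = v := by
  match u, v, huv, hvu with
  | none, none, _, _ => rfl
  | some p, some q, ⟨γ, hγ, hpq⟩, ⟨δ, hδ, hqp⟩ =>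
    obtain ⟨rfl, rfl⟩ : δ = [] ∧ γ = [] := by
      simpa using congrArg List.length (hγ.trans (congrArg (· ++ γ) hδ))
    simp only [List.append_nil] at hγ
    exact congrArg some (Prod.ext hγ (hpq.antisymm hqp))

end LabelledSpace

section
variable {V Edg A : Type*} (L : LabelledSpace V Edg A)

theorem exists_separating_element
    (ξ : Set (Option (List A × Set V))) (hξ : L.IsTightESFilter ξ)
    (F : Set (Option (List A × Set V))) (hFfin : F.Finite) (hF : F ⊆ L.ESnz)
    (w : Option (List A × Set V)) (hw : w ∈ ξ ∩ F)
    (hmin : ∀ u ∈ ξ ∩ F, L.ESle w u) :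
    ∃ z : Option (List A × Set V), z ∈ L.ESnz ∧ L.ESle z w ∧
      ∀ u ∈ F, L.ESle u w → u ≠ w → L.ESmul z u = none := by
  by_contra! hsep
  set Z := {u | u ∈ F ∧ L.ESle u w ∧ u ≠ w}
  have hcover : L.ESCover w Z := by
    refine ⟨fun u hu => ⟨(hF hu.1).1, hu.2.1⟩, fun y hy hy0 hyw => ?_⟩
    obtain ⟨u, huF, huw, hne, hyu⟩ := hsep y ⟨hy, hy0⟩ hyw
    exact ⟨u, ⟨huF, huw, hne⟩, hyu⟩
  obtain ⟨u, ⟨huF, huw, hne⟩, huξ⟩ := hξ.2 w hw.1 Z (hFfin.subset fun _ hu => hu.1) hcover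
  exact hne (L.ESle_antisymm huw (hmin u ⟨huξ, huF⟩))

end
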